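/- Let G be a finite non-abelian group and let m, n be positive integers. Then T(G) is isomorphic to a disjoint union of m copies of the complete graph K_n if and only if mn = [G : Z(G)] − 1 and for every non-central x ∈ G, the centralizer C_G(x) is abelian and [C_G(x) : Z(G)] = n + 1. -/

import Mathlib

/-- The commuting graph of a group `G` on a subset `X`. -/
def commGraph (G : Type*) [Group G] (X : Set G) : SimpleGraph X where
  Adj x y := x ≠ y ∧ (x : G) * y = (y : G) * x
  symm := ⟨fun x y ⟨h1, h2⟩ => ⟨h1.symm, h2.symm⟩⟩
  loopless := ⟨fun x ⟨h, _⟩ => h rfl⟩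

/-- `T` is a transversal of the center of `G`: each coset of `Z(G)` contains
exactly one element of `T`. -/
def IsCenterTransversal (G : Type*) [Group G] (T : Set G) : Prop :=
  ∀ g : G, ∃! t, t ∈ T ∧ g⁻¹ * t ∈ Subgroup.center G

/-- The graph `T(G)`: the commuting graph of `G` on `T \ Z(G)`. -/
def TGraph (G : Type*) [Group G] (T : Set G) :
    SimpleGraph ↥(T \ (Subgroup.center G : Set G)) :=
  commGraph G (T \ (Subgroup.center G : Set G))

/-- Strongly regular graph with parameters `(v, k, l, m)` (with `0 < k < v - 1`). -/
def IsSRG {V : Type*} (G : SimpleGraph V) (v k l m : ℕ) : Prop :=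
  Nat.card V = v ∧ 0 < k ∧ k + 1 < v ∧
    (∀ x, (G.neighborSet x).ncard = k) ∧
    (∀ x y, G.Adj x y → (G.neighborSet x ∩ G.neighborSet y).ncard = l) ∧
    (∀ x y, x ≠ y → ¬ G.Adj x y → (G.neighborSet x ∩ G.neighborSet y).ncard = m)

/-- The disjoint union of `m` copies of the complete graph `K_n`. -/
def mKn (m n : ℕ) : SimpleGraph (Fin m × Fin n) where
  Adj x y := x ≠ y ∧ x.1 = y.1
  symm := ⟨fun x y ⟨h1, h2⟩ => ⟨h1.symm, h2.symm⟩⟩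
  loopless := ⟨fun x ⟨h, _⟩ => h rfl⟩

open scoped commutatorElement

theorem commutator_mem_commutatorSubgroup {G : Type*} [Group G] (x y : G) :
    ⁅x, y⁆ ∈ commutator G := by
  rw [commutator_def]
  exact Subgroup.commutator_mem_commutator (Subgroup.mem_top x) (Subgroup.mem_top y)

/-- Isoclinism of groups. -/
def Isoclinic (G H : Type*) [Group G] [Group H] : Prop :=
  ∃ (φ : G ⧸ Subgroup.center G ≃* H ⧸ Subgroup.center H)
    (ψ : commutator G ≃* commutator H),
    ∀ (x y : G) (x' y' : H),
      φ (QuotientGroup.mk x) = QuotientGroup.mk x' →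
      φ (QuotientGroup.mk y) = QuotientGroup.mk y' →
      (ψ ⟨⁅x, y⁆, commutator_mem_commutatorSubgroup x y⟩ : H) = ⁅x', y'⁆

/-- An extraspecial `p`-group: `G' = Z(G) = Φ(G)` and `|Z(G)| = p`. -/
def IsExtraspecial (p : ℕ) (G : Type*) [Group G] : Prop :=
  IsPGroup p G ∧ commutator G = Subgroup.center G ∧
    frattini G = Subgroup.center G ∧ Nat.card (Subgroup.center G) = p

open Pointwise Subgroup

/-!
`T \ Z(G)` is in bijection with the non-trivial cosets of `Z(G)`, and commuting depends only on
cosets of `Z(G)`. A graph is `mK_n` exactly when "equal or adjacent" is an equivalence relation on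
its `mn` vertices whose classes all have `n` elements. For `T(G)` this relation is commuting: it is
transitive iff the centralizers of non-central elements are abelian, and the class of `v` consists
of the `[C_G(v) : Z(G)] - 1` vertices lying in `C_G(v)`.
-/

section DisjointCliques

variable {V : Type*} [Finite V] {m n : ℕ}

theorem Setoid.exists_equiv_fin_prod_of_card_class (s : Setoid V) (hn : 0 < n)
    (hclass : ∀ v, Nat.card {w // s w v} = n) (hcard : Nat.card V = m * n) :
    ∃ e : V ≃ Fin m × Fin n, ∀ v w, (e v).1 = (e w).1 ↔ s v w := by
  have hfiber (q : Quotient s) : Nat.card {v // Quotient.mk s v = q} = n := by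
    obtain ⟨v, rfl⟩ := Quotient.exists_rep q
    rw [← hclass v]
    exact Nat.card_congr (Equiv.subtypeEquivRight fun w => Quotient.eq)
  let fiberEquiv (q : Quotient s) : {v // Quotient.mk s v = q} ≃ Fin n :=
    Finite.equivFinOfCardEq (hfiber q)
  let e₁ : V ≃ Quotient s × Fin n := (Equiv.sigmaFiberEquiv (Quotient.mk s)).symm.trans
    ((Equiv.sigmaCongrRight fiberEquiv).trans (Equiv.sigmaEquivProd _ _))
  have hQ : Nat.card (Quotient s) = m := by
    have h := Nat.card_congr e₁
    rw [hcard, Nat.card_prod, Nat.card_fin] at h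
    exact (Nat.eq_of_mul_eq_mul_right hn h).symm
  refine ⟨e₁.trans ((Finite.equivFinOfCardEq hQ).prodCongr (Equiv.refl _)), fun v w => ?_⟩
  simp only [Equiv.trans_apply, Equiv.prodCongr_apply, Prod.map_fst, EmbeddingLike.apply_eq_iff_eq]
  exact Quotient.eq

theorem nonempty_iso_mKn_iff (H : SimpleGraph V) (r : V → V → Prop)
    (hr : ∀ v, r v v) (hadj : ∀ v w, H.Adj v w ↔ v ≠ w ∧ r v w) (hn : 0 < n) :
    Nonempty (H ≃g mKn m n) ↔
      Nat.card V = m * n ∧ (∀ u v w, r u v → r v w → r u w) ∧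
        ∀ v, Nat.card {w // r w v} = n := by
  constructor
  · rintro ⟨f⟩
    have hr_iff (v w : V) : r v w ↔ (f v).1 = (f w).1 := by
      by_cases hvw : v = w
      · subst hvw
        exact iff_of_true (hr v) rfl
      calc r v w ↔ H.Adj v w := by rw [hadj, and_iff_right hvw]
        _ ↔ (mKn m n).Adj (f v) (f w) := f.map_rel_iff.symm
        _ ↔ (f v).1 = (f w).1 := and_iff_right (f.injective.ne hvw)
    refine ⟨by simp [Nat.card_congr f.toEquiv], fun u v w huv hvw => ?_, fun v => ?_⟩
    · rw [hr_iff] at huv hvw ⊢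
      exact huv.trans hvw
    · rw [Nat.card_congr
        ((f.toEquiv.subtypeEquiv (q := fun p => p.1 = (f v).1) fun w => hr_iff w v).trans
          (Equiv.prodSubtypeFstEquivSubtypeProd (p := (· = (f v).1))))]
      simp
  · rintro ⟨hcard, htrans, hclass⟩
    have hsymm (v w : V) (hvw : r v w) : r w v := by
      by_cases h : v = w
      · exact h ▸ hr v
      exact ((hadj w v).mp (((hadj v w).mpr ⟨h, hvw⟩).symm)).2
    obtain ⟨e, he⟩ := Setoid.exists_equiv_fin_prod_of_card_class
      ⟨r, hr, hsymm _ _, htrans _ _ _⟩ hn hclass hcard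
    refine ⟨⟨e, fun {v w} => ?_⟩⟩
    rw [hadj]
    exact and_congr e.injective.ne_iff (he v w)

end DisjointCliques

section CenterTransversal

variable {G : Type*} [Group G]

theorem centralizer_singleton_eq_of_inv_mul_mem_center {a b : G} (h : a⁻¹ * b ∈ center G) :
    centralizer {a} = centralizer {b} := by
  obtain ⟨z, hz, rfl⟩ : ∃ z ∈ center G, b = a * z := ⟨a⁻¹ * b, h, by group⟩
  ext x
  have hxz : Commute x z := mem_center_iff.mp hz x
  simp only [mem_centralizer_singleton_iff]
  exact ⟨fun hxa => Commute.mul_right hxa hxz,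
    fun hxaz => by simpa using (Commute.mul_right hxaz hxz.inv_right).eq⟩

theorem commute_iff_of_inv_mul_mem_center {a a' b b' : G} (ha : a⁻¹ * a' ∈ center G)
    (hb : b⁻¹ * b' ∈ center G) : Commute a' b' ↔ Commute a b := by
  have hca := centralizer_singleton_eq_of_inv_mul_mem_center ha
  have hcb := centralizer_singleton_eq_of_inv_mul_mem_center hb
  calc Commute a' b' ↔ a' ∈ centralizer {b} := by rw [hcb, mem_centralizer_singleton_iff]; rfl
    _ ↔ b ∈ centralizer {a} := by
      rw [hca, mem_centralizer_singleton_iff, mem_centralizer_singleton_iff, eq_comm]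
    _ ↔ Commute a b := by rw [mem_centralizer_singleton_iff, eq_comm]; rfl

theorem mem_of_inv_mul_mem_center {K : Subgroup G} (hK : center G ≤ K) {x y : G}
    (h : x⁻¹ * y ∈ center G) (hx : x ∈ K) : y ∈ K := by
  simpa using K.mul_mem hx (hK h)

namespace IsCenterTransversal

variable {T : Set G}

theorem eq_of_inv_mul_mem_center (hT : IsCenterTransversal G T) {t t' : G} (ht : t ∈ T)
    (ht' : t' ∈ T) (h : t⁻¹ * t' ∈ center G) : t = t' := by
  obtain ⟨u, -, hu⟩ := hT t
  rw [hu t' ⟨ht', h⟩, hu t ⟨ht, by rw [inv_mul_cancel]; exact one_mem _⟩]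

theorem exists_vertex (hT : IsCenterTransversal G T) {x : G} (hx : x ∉ center G) :
    ∃ v : ↥(T \ (center G : Set G)), x⁻¹ * v ∈ center G := by
  obtain ⟨t, ⟨htT, hxt⟩, -⟩ := hT x
  refine ⟨⟨t, htT, fun htZ => hx ?_⟩, hxt⟩
  simpa using mul_mem htZ (inv_mem hxt)

theorem isMulCommutative_iff (hT : IsCenterTransversal G T) {K : Subgroup G}
    (hK : center G ≤ K) :
    IsMulCommutative K ↔
      ∀ u w : ↥(T \ (center G : Set G)), (u : G) ∈ K → (w : G) ∈ K →
        Commute (u : G) w := by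
  rw [← le_centralizer_iff_isMulCommutative]
  refine ⟨fun h u w hu hw => mem_centralizer_iff.mp (h hw) u hu, fun h a ha => ?_⟩
  rw [mem_centralizer_iff]
  intro b hb
  by_cases haZ : a ∈ center G
  · exact mem_center_iff.mp haZ b
  by_cases hbZ : b ∈ center G
  · exact (mem_center_iff.mp hbZ a).symm
  obtain ⟨u, hau⟩ := hT.exists_vertex haZ
  obtain ⟨w, hbw⟩ := hT.exists_vertex hbZ
  exact (commute_iff_of_inv_mul_mem_center hbw hau).mp
    (h w u (mem_of_inv_mul_mem_center hK hbw hb) (mem_of_inv_mul_mem_center hK hau ha))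

theorem card_vertices_mem [Finite G] (hT : IsCenterTransversal G T) {K : Subgroup G}
    (hK : center G ≤ K) :
    Nat.card {v : ↥(T \ (center G : Set G)) // (v : G) ∈ K} = (center G).relIndex K - 1 := by
  let toQuotient (v : {v : ↥(T \ (center G : Set G)) // (v : G) ∈ K}) :
      {c : K ⧸ (center G).subgroupOf K // c ≠ 1} :=
    ⟨QuotientGroup.mk ⟨v, v.2⟩, fun h =>
      v.1.2.2 (by simpa [QuotientGroup.eq_one_iff, mem_subgroupOf] using h)⟩
  have hbij : Function.Bijective toQuotient := by
    refine ⟨fun v w hvw => ?_, fun ⟨c, hc⟩ => ?_⟩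
    · have h := QuotientGroup.eq.mp (congrArg Subtype.val hvw)
      exact Subtype.ext (Subtype.ext (hT.eq_of_inv_mul_mem_center v.1.2.1 w.1.2.1 h))
    · obtain ⟨g, rfl⟩ := QuotientGroup.mk_surjective c
      have hg : (g : G) ∉ center G := fun h => hc ((QuotientGroup.eq_one_iff _).mpr h)
      obtain ⟨v, hgv⟩ := hT.exists_vertex hg
      refine ⟨⟨v, mem_of_inv_mul_mem_center hK hgv g.2⟩,
        Subtype.ext (QuotientGroup.eq.mpr ?_)⟩
      simpa [mem_subgroupOf] using inv_mem hgv
  rw [Nat.card_eq_of_bijective toQuotient hbij]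
  classical
  have := Fintype.ofFinite (K ⧸ (center G).subgroupOf K)
  simp [Nat.card_eq_fintype_card, Fintype.card_subtype_compl, relIndex, index]

theorem card_vertices [Finite G] (hT : IsCenterTransversal G T) :
    Nat.card ↥(T \ (center G : Set G)) = (center G).index - 1 := by
  rw [← relIndex_top_right, ← hT.card_vertices_mem le_top]
  exact Nat.card_congr (Equiv.subtypeUnivEquiv fun v => mem_top _).symm

theorem forall_vertex_iff (hT : IsCenterTransversal G T) (P : Subgroup G → Prop) :
    (∀ v : ↥(T \ (center G : Set G)), P (centralizer {(v : G)})) ↔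
      ∀ x ∉ center G, P (centralizer {x}) := by
  refine ⟨fun h x hx => ?_, fun h v => h v v.2.2⟩
  obtain ⟨v, hxv⟩ := hT.exists_vertex hx
  simpa [centralizer_singleton_eq_of_inv_mul_mem_center hxv] using h v

theorem transitive_commute_iff (hT : IsCenterTransversal G T) :
    (∀ u v w : ↥(T \ (center G : Set G)), Commute (u : G) v → Commute (v : G) w →
        Commute (u : G) w) ↔
      ∀ v : ↥(T \ (center G : Set G)), IsMulCommutative (centralizer {(v : G)}) := by
  simp only [hT.isMulCommutative_iff (center_le_centralizer _), mem_centralizer_singleton_iff]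
  exact ⟨fun h v u w hu hw => h u v w hu hw.symm, fun h u v w huv hvw => h v u w huv hvw.symm⟩

theorem card_commute_eq_iff [Finite G] (hT : IsCenterTransversal G T)
    (v : ↥(T \ (center G : Set G))) (n : ℕ) :
    Nat.card {w : ↥(T \ (center G : Set G)) // Commute (w : G) v} = n ↔
      (center G).relIndex (centralizer {(v : G)}) = n + 1 := by
  have hcard := hT.card_vertices_mem (center_le_centralizer {(v : G)})
  simp only [mem_centralizer_singleton_iff] at hcard
  have hpos : (center G).relIndex (centralizer {(v : G)}) ≠ 0 :=
    index_ne_zero_of_finite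
  change Nat.card {w : ↥(T \ (center G : Set G)) // (w : G) * v = v * w} = n ↔ _
  omega

end IsCenterTransversal

end CenterTransversal

theorem stmt15_general (G : Type*) [Group G] [Finite G]
    (m n : ℕ) (hn : 0 < n) (T : Set G) (hT : IsCenterTransversal G T) :
    Nonempty (TGraph G T ≃g mKn m n) ↔
      (m * n = (Subgroup.center G).index - 1 ∧
        ∀ x : G, x ∉ Subgroup.center G →
          IsMulCommutative (Subgroup.centralizer {x}) ∧
            (Subgroup.center G).relIndex (Subgroup.centralizer {x}) = n + 1) := by
  rw [nonempty_iso_mKn_iff (TGraph G T) (fun v w => Commute (v : G) w) (fun v => Commute.refl _)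
    (fun _ _ => Iff.rfl) hn, hT.card_vertices, eq_comm, hT.transitive_commute_iff]
  simp only [hT.card_commute_eq_iff]
  rw [← forall_and,
    hT.forall_vertex_iff fun C => IsMulCommutative C ∧ (center G).relIndex C = n + 1]

theorem stmt15 (G : Type*) [Group G] [Finite G] (hna : ∃ a b : G, a * b ≠ b * a)
    (m n : ℕ) (hm : 0 < m) (hn : 0 < n) (T : Set G) (hT : IsCenterTransversal G T) :
    Nonempty (TGraph G T ≃g mKn m n) ↔
      (m * n = (Subgroup.center G).index - 1 ∧
        ∀ x : G, x ∉ Subgroup.center G →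
          IsMulCommutative (Subgroup.centralizer {x}) ∧
            (Subgroup.center G).relIndex (Subgroup.centralizer {x}) = n + 1) :=
  stmt15_general G m n hn T hT
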